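/- Suppose Ψ_{U,M,K} and Ψ_{V,K,N} are well defined and T^i(V) ∩ U = ∅ for 1 ≤ i ≤ N − M. Then the commutator Ψ_{V,K,N} Ψ_{U,M,K}^{−1} Ψ_{V,K,N}^{−1} Ψ_{U,M,K} equals Ψ_{U∩V, K−1, K+1}. -/
import Mathlib


open scoped Classical

variable {X : Type*} [TopologicalSpace X]

/-- The `i`-th power (for `i : ℤ`) of the homeomorphism `T`, as a map `X → X`. -/
def Tpow (T : X ≃ₜ X) (i : ℤ) : X → X := ⇑((T.toEquiv ^ i : Equiv.Perm X))

/-- `Ψ_{U,M,N}` is well defined: the sets `T^M(U), …, T^N(U)` are pairwise disjoint. -/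
def PsiDefined (T : X ≃ₜ X) (U : Set X) (M N : ℤ) : Prop :=
  ∀ i j : ℤ, M ≤ i → i ≤ N → M ≤ j → j ≤ N → i ≠ j →
    Disjoint (Tpow T i '' U) (Tpow T j '' U)

/-- The transformation `Ψ_{U,M,N}`: equal to `T` on `T^M(U) ∪ … ∪ T^{N-1}(U)`,
to `T^{M-N}` on `T^N(U)`, and to the identity elsewhere. -/
noncomputable def Psi (T : X ≃ₜ X) (U : Set X) (M N : ℤ) : X → X := fun x =>
  if ∃ i : ℤ, M ≤ i ∧ i < N ∧ x ∈ Tpow T i '' U then T x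
  else if x ∈ Tpow T N '' U then Tpow T (M - N) x
  else x

lemma Tpow_add (T : X ≃ₜ X) (i j : ℤ) (x : X) :
    Tpow T i (Tpow T j x) = Tpow T (i + j) x := by
  simp only [Tpow, ← Equiv.Perm.mul_apply, ← zpow_add]

lemma Tpow_zero (T : X ≃ₜ X) (x : X) : Tpow T 0 x = x := by simp [Tpow]

lemma Tpow_one (T : X ≃ₜ X) (x : X) : Tpow T 1 x = T x := by simp [Tpow]

/-- Composition of powers with a prescribed resulting exponent. -/
lemma Tpow_add' (T : X ≃ₜ X) {i j k : ℤ} (x : X) (h : i + j = k) :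
    Tpow T i (Tpow T j x) = Tpow T k x := by
  rw [Tpow_add, h]

lemma mem_Tpow_image {T : X ≃ₜ X} {i : ℤ} {S : Set X} {x : X} :
    x ∈ Tpow T i '' S ↔ Tpow T (-i) x ∈ S := by
  constructor
  · rintro ⟨y, hy, rfl⟩
    rwa [Tpow_add' T y (neg_add_cancel i), Tpow_zero]
  · intro h
    exact ⟨Tpow T (-i) x, h, by rw [Tpow_add' T x (add_neg_cancel i), Tpow_zero]⟩

/-- Shifting a membership by a power of `T`, with prescribed resulting exponent. -/
lemma mem_shift {T : X ≃ₜ X} {i : ℤ} {S : Set X} {x : X} (j : ℤ) {k : ℤ}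
    (h : x ∈ Tpow T i '' S) (hk : i + j = k) : Tpow T j x ∈ Tpow T k '' S := by
  rw [mem_Tpow_image] at h ⊢
  rwa [Tpow_add' T x (show -k + j = -i by omega)]

lemma Psi_apply_mem {T : X ≃ₜ X} {U : Set X} {M N i : ℤ} {x : X}
    (h1 : M ≤ i) (h2 : i < N) (hx : x ∈ Tpow T i '' U) :
    Psi T U M N x = T x := by
  unfold Psi
  rw [if_pos ⟨i, h1, h2, hx⟩]

lemma Psi_apply_top {T : X ≃ₜ X} {U : Set X} {M N : ℤ} {x : X}
    (hne : ∀ i, M ≤ i → i < N → x ∉ Tpow T i '' U)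
    (hx : x ∈ Tpow T N '' U) :
    Psi T U M N x = Tpow T (M - N) x := by
  unfold Psi
  rw [if_neg, if_pos hx]
  rintro ⟨i, h1, h2, hxi⟩
  exact hne i h1 h2 hxi

lemma Psi_apply_id {T : X ≃ₜ X} {U : Set X} {M N : ℤ} {x : X} (hMN : M ≤ N)
    (hne : ∀ i, M ≤ i → i ≤ N → x ∉ Tpow T i '' U) :
    Psi T U M N x = x := by
  unfold Psi
  rw [if_neg, if_neg (hne N hMN le_rfl)]
  rintro ⟨i, h1, h2, hxi⟩
  exact hne i h1 h2.le hxi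

/-- Key separation consequence: a point cannot lie in `T^i(U)` and `T^j(V)` with
`M ≤ i < j ≤ N`. -/
lemma key_sep {T : X ≃ₜ X} {U V : Set X} {M N : ℤ}
    (hsep : ∀ i : ℤ, 1 ≤ i → i ≤ N - M → Tpow T i '' V ∩ U = ∅)
    {i j : ℤ} (hMi : M ≤ i) (hjN : j ≤ N) (hij : i < j) {x : X}
    (hxU : x ∈ Tpow T i '' U) (hxV : x ∈ Tpow T j '' V) : False := by
  have h1 : Tpow T (-i) x ∈ U := mem_Tpow_image.mp hxU
  have h2 : Tpow T (-i) x ∈ Tpow T (j - i) '' V := by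
    rw [mem_Tpow_image, Tpow_add' T x (show -(j - i) + -i = -j by ring)]
    exact mem_Tpow_image.mp hxV
  have h3 := hsep (j - i) (by omega) (by omega)
  exact Set.eq_empty_iff_forall_notMem.mp h3 _ ⟨h2, h1⟩

theorem stmt19 [CompactSpace X] [T2Space X]
    [TotallyDisconnectedSpace X] (T : X ≃ₜ X) (U V : Set X)
    (hU : IsClopen U) (hV : IsClopen V) (M K N : ℤ) (hMK : M < K) (hKN : K < N)
    (hPsiU : PsiDefined T U M K) (hPsiV : PsiDefined T V K N)
    (hsep : ∀ i : ℤ, 1 ≤ i → i ≤ N - M → Tpow T i '' V ∩ U = ∅)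
    (fU fV : X → X)
    (hfU₁ : Function.LeftInverse fU (Psi T U M K))
    (hfU₂ : Function.RightInverse fU (Psi T U M K))
    (hfV₁ : Function.LeftInverse fV (Psi T V K N))
    (hfV₂ : Function.RightInverse fV (Psi T V K N)) :
    Psi T V K N ∘ fU ∘ fV ∘ Psi T U M K = Psi T (U ∩ V) (K - 1) (K + 1) := by
  have hWU : ∀ (i : ℤ) (x : X), x ∈ Tpow T i '' (U ∩ V) → x ∈ Tpow T i '' U :=
    fun i x h => Set.image_mono Set.inter_subset_left h
  have hWV : ∀ (i : ℤ) (x : X), x ∈ Tpow T i '' (U ∩ V) → x ∈ Tpow T i '' V :=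
    fun i x h => Set.image_mono Set.inter_subset_right h
  have hWmk : ∀ (i : ℤ) (x : X), x ∈ Tpow T i '' U → x ∈ Tpow T i '' V →
      x ∈ Tpow T i '' (U ∩ V) := fun i x h1 h2 =>
    mem_Tpow_image.mpr ⟨mem_Tpow_image.mp h1, mem_Tpow_image.mp h2⟩
  funext x
  simp only [Function.comp_apply]
  by_cases hW1 : x ∈ Tpow T (K - 1) '' (U ∩ V)
  · -- Case 1 : x ∈ T^{K-1}(U∩V); both sides equal T x
    have hxU : x ∈ Tpow T (K - 1) '' U := hWU _ _ hW1
    have hstep1 : Psi T U M K x = T x := Psi_apply_mem (by omega) (by omega) hxU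
    have hTx : T x ∈ Tpow T K '' (U ∩ V) := by
      have := mem_shift 1 hW1 (show K - 1 + 1 = K by ring)
      rwa [Tpow_one] at this
    have hz : Tpow T (N - K) (T x) ∈ Tpow T N '' (U ∩ V) :=
      mem_shift (N - K) hTx (by ring)
    have hΨVz : Psi T V K N (Tpow T (N - K) (T x)) = T x := by
      rw [Psi_apply_top (fun j hj1 hj2 hmem =>
        Set.disjoint_left.mp (hPsiV j N hj1 hj2.le (by omega) le_rfl (by omega))
          hmem (hWV _ _ hz)) (hWV _ _ hz)]
      rw [Tpow_add' T (T x) (show K - N + (N - K) = 0 by ring), Tpow_zero]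
    have hfVTx : fV (T x) = Tpow T (N - K) (T x) := by
      have := hfV₁ (Tpow T (N - K) (T x))
      rwa [hΨVz] at this
    have hΨUz : Psi T U M K (Tpow T (N - K) (T x)) = Tpow T (N - K) (T x) := by
      refine Psi_apply_id (by omega) (fun i hi1 hi2 hmem => ?_)
      exact key_sep hsep hi1 (le_refl N) (by omega) hmem (hWV _ _ hz)
    have hfUz : fU (Tpow T (N - K) (T x)) = Tpow T (N - K) (T x) := by
      have := hfU₁ (Tpow T (N - K) (T x))
      rwa [hΨUz] at this
    rw [hstep1, hfVTx, hfUz, hΨVz]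
    rw [Psi_apply_mem (le_refl (K - 1)) (by omega) hW1]
  · by_cases hW2 : x ∈ Tpow T K '' (U ∩ V)
    · -- Case 2 : x ∈ T^K(U∩V); both sides equal T x
      have hΨUx : Psi T U M K x = Tpow T (M - K) x := by
        refine Psi_apply_top (fun i hi1 hi2 hmem => ?_) (hWU _ _ hW2)
        exact Set.disjoint_left.mp (hPsiU i K hi1 hi2.le hMK.le le_rfl (by omega))
          hmem (hWU _ _ hW2)
      have hy : Tpow T (M - K) x ∈ Tpow T M '' (U ∩ V) :=
        mem_shift (M - K) hW2 (by ring)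
      have hΨVy : Psi T V K N (Tpow T (M - K) x) = Tpow T (M - K) x := by
        refine Psi_apply_id (by omega) (fun j hj1 hj2 hmem => ?_)
        exact key_sep hsep (le_refl M) hj2 (by omega) (hWU _ _ hy) hmem
      have hfVy : fV (Tpow T (M - K) x) = Tpow T (M - K) x := by
        have := hfV₁ (Tpow T (M - K) x)
        rwa [hΨVy] at this
      have hfUy : fU (Tpow T (M - K) x) = x := by
        have := hfU₁ x
        rwa [hΨUx] at this
      have hΨVx : Psi T V K N x = T x :=
        Psi_apply_mem (le_refl K) hKN (hWV _ _ hW2)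
      rw [hΨUx, hfVy, hfUy, hΨVx]
      rw [Psi_apply_mem (by omega : K - 1 ≤ K) (by omega) hW2]
    · by_cases hW3 : x ∈ Tpow T (K + 1) '' (U ∩ V)
      · -- Case 3 : x ∈ T^{K+1}(U∩V); both sides equal T^{-2} x
        have hΨUx : Psi T U M K x = x := by
          refine Psi_apply_id hMK.le (fun i hi1 hi2 hmem => ?_)
          exact key_sep hsep hi1 (by omega : K + 1 ≤ N) (by omega) hmem (hWV _ _ hW3)
        have hz : Tpow T (-1) x ∈ Tpow T K '' (U ∩ V) :=
          mem_shift (-1) hW3 (by ring)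
        have hΨVz : Psi T V K N (Tpow T (-1) x) = x := by
          rw [Psi_apply_mem (le_refl K) hKN (hWV _ _ hz), ← Tpow_one T,
            Tpow_add' T x (show (1 : ℤ) + -1 = 0 by ring), Tpow_zero]
        have hfVx : fV x = Tpow T (-1) x := by
          have := hfV₁ (Tpow T (-1) x)
          rwa [hΨVz] at this
        have hw : Tpow T (-1) (Tpow T (-1) x) ∈ Tpow T (K - 1) '' (U ∩ V) :=
          mem_shift (-1) hz (by ring)
        have hΨUw : Psi T U M K (Tpow T (-1) (Tpow T (-1) x)) = Tpow T (-1) x := by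
          rw [Psi_apply_mem (by omega : M ≤ K - 1) (by omega) (hWU _ _ hw),
            ← Tpow_one T, Tpow_add' T (Tpow T (-1) x) (show (1 : ℤ) + -1 = 0 by ring),
            Tpow_zero]
        have hfUz : fU (Tpow T (-1) x) = Tpow T (-1) (Tpow T (-1) x) := by
          have := hfU₁ (Tpow T (-1) (Tpow T (-1) x))
          rwa [hΨUw] at this
        have hΨVw : Psi T V K N (Tpow T (-1) (Tpow T (-1) x)) =
            Tpow T (-1) (Tpow T (-1) x) := by
          refine Psi_apply_id (by omega) (fun j hj1 hj2 hmem => ?_)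
          exact key_sep hsep (by omega : M ≤ K - 1) hj2 (by omega) (hWU _ _ hw) hmem
        rw [hΨUx, hfVx, hfUz, hΨVw]
        have hRHS : Psi T (U ∩ V) (K - 1) (K + 1) x = Tpow T (K - 1 - (K + 1)) x := by
          refine Psi_apply_top (fun i hi1 hi2 hmem => ?_) hW3
          have : i = K - 1 ∨ i = K := by omega
          rcases this with rfl | rfl
          · exact hW1 hmem
          · exact hW2 hmem
        rw [hRHS, Tpow_add' T x (show (-1 : ℤ) + -1 = K - 1 - (K + 1) by ring)]
      · -- Case 4 : x in none of the three sets; both sides equal x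
        have hRHS : Psi T (U ∩ V) (K - 1) (K + 1) x = x := by
          refine Psi_apply_id (by omega) (fun i hi1 hi2 hmem => ?_)
          have : i = K - 1 ∨ i = K ∨ i = K + 1 := by omega
          rcases this with rfl | rfl | rfl
          · exact hW1 hmem
          · exact hW2 hmem
          · exact hW3 hmem
        rw [hRHS]
        by_cases hA : ∃ i, M ≤ i ∧ i ≤ K ∧ x ∈ Tpow T i '' U
        · obtain ⟨i, hi1, hi2, hxU⟩ := hA
          -- x is not in any T^j(V), K ≤ j ≤ N
          have hxnV : ∀ j, K ≤ j → j ≤ N → x ∉ Tpow T j '' V := by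
            intro j hj1 hj2 hxV
            rcases lt_or_eq_of_le (show i ≤ j by omega) with h | h
            · exact key_sep hsep hi1 hj2 h hxU hxV
            · have hiK : i = K := by omega
              rw [hiK] at hxU
              rw [← h, hiK] at hxV
              exact hW2 (hWmk _ _ hxU hxV)
          have hΨVx : Psi T V K N x = x :=
            Psi_apply_id (by omega) hxnV
          rcases lt_or_eq_of_le hi2 with hiK | hiK
          · -- i < K : Psi_U x = T x
            have hΨUx : Psi T U M K x = T x := Psi_apply_mem hi1 hiK hxU
            have hTx : T x ∈ Tpow T (i + 1) '' U := by
              have := mem_shift 1 hxU rfl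
              rwa [Tpow_one] at this
            have hTxnV : ∀ j, K ≤ j → j ≤ N → T x ∉ Tpow T j '' V := by
              intro j hj1 hj2 hxV
              rcases lt_or_eq_of_le (show i + 1 ≤ j by omega) with h | h
              · exact key_sep hsep (by omega) hj2 h hTx hxV
              · -- i + 1 = j = K, so T x ∈ T^K(U∩V), hence x ∈ T^{K-1}(U∩V)
                have hiK' : i + 1 = K := by omega
                rw [← h] at hxV
                have hTxW : T x ∈ Tpow T (i + 1) '' (U ∩ V) := hWmk _ _ hTx hxV
                apply hW1
                have h2 := mem_shift (-1) hTxW (show i + 1 + -1 = K - 1 by omega)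
                rwa [← Tpow_one T,
                  Tpow_add' T x (show (-1 : ℤ) + 1 = 0 by ring), Tpow_zero] at h2
            have hΨVTx : Psi T V K N (T x) = T x :=
              Psi_apply_id (by omega) hTxnV
            have hfVTx : fV (T x) = T x := by
              have := hfV₁ (T x); rwa [hΨVTx] at this
            have hfUTx : fU (T x) = x := by
              have := hfU₁ x; rwa [hΨUx] at this
            rw [hΨUx, hfVTx, hfUTx, hΨVx]
          · -- i = K : Psi_U x = T^{M-K} x
            rw [hiK] at hxU
            have hΨUx : Psi T U M K x = Tpow T (M - K) x := by
              refine Psi_apply_top (fun i' hi1' hi2' hmem => ?_) hxU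
              exact Set.disjoint_left.mp
                (hPsiU i' K hi1' hi2'.le hMK.le le_rfl (by omega)) hmem hxU
            have hy : Tpow T (M - K) x ∈ Tpow T M '' U :=
              mem_shift (M - K) hxU (by ring)
            have hΨVy : Psi T V K N (Tpow T (M - K) x) = Tpow T (M - K) x := by
              refine Psi_apply_id (by omega) (fun j hj1 hj2 hmem => ?_)
              exact key_sep hsep (le_refl M) hj2 (by omega) hy hmem
            have hfVy : fV (Tpow T (M - K) x) = Tpow T (M - K) x := by
              have := hfV₁ (Tpow T (M - K) x); rwa [hΨVy] at this
            have hfUy : fU (Tpow T (M - K) x) = x := by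
              have := hfU₁ x; rwa [hΨUx] at this
            rw [hΨUx, hfVy, hfUy, hΨVx]
        · push_neg at hA
          have hΨUx : Psi T U M K x = x := Psi_apply_id hMK.le hA
          rw [hΨUx]
          by_cases hB : ∃ j, K ≤ j ∧ j ≤ N ∧ x ∈ Tpow T j '' V
          · obtain ⟨j, hj1, hj2, hxV⟩ := hB
            rcases lt_or_eq_of_le hj1 with hKj | hKj
            · -- K < j ≤ N : fV x = T^{-1} x ∈ T^{j-1}(V)
              have hz : Tpow T (-1) x ∈ Tpow T (j - 1) '' V :=
                mem_shift (-1) hxV (by ring)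
              have hΨVz : Psi T V K N (Tpow T (-1) x) = x := by
                rw [Psi_apply_mem (by omega : K ≤ j - 1) (by omega) hz,
                  ← Tpow_one T, Tpow_add' T x (show (1 : ℤ) + -1 = 0 by ring),
                  Tpow_zero]
              have hfVx : fV x = Tpow T (-1) x := by
                have := hfV₁ (Tpow T (-1) x); rwa [hΨVz] at this
              have hznU : ∀ i, M ≤ i → i ≤ K → Tpow T (-1) x ∉ Tpow T i '' U := by
                intro i hi1 hi2 hmem
                rcases lt_or_eq_of_le (show i ≤ j - 1 by omega) with h | h
                · exact key_sep hsep hi1 (by omega) h hmem hz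
                · -- i = j - 1, forces i = K = j - 1, so T^{-1}x ∈ T^K(U∩V),
                  -- hence x ∈ T^{K+1}(U∩V)
                  have hiK : i = K := by omega
                  rw [hiK] at hmem
                  have hz' : Tpow T (-1) x ∈ Tpow T K '' V := by
                    rw [(show j - 1 = K by omega)] at hz
                    exact hz
                  have hzW : Tpow T (-1) x ∈ Tpow T K '' (U ∩ V) :=
                    hWmk _ _ hmem hz'
                  apply hW3
                  have h2 := mem_shift 1 hzW (show K + 1 = K + 1 by ring)
                  rwa [Tpow_add' T x (show (1 : ℤ) + -1 = 0 by ring), Tpow_zero] at h2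
              have hΨUz : Psi T U M K (Tpow T (-1) x) = Tpow T (-1) x :=
                Psi_apply_id hMK.le hznU
              have hfUz : fU (Tpow T (-1) x) = Tpow T (-1) x := by
                have := hfU₁ (Tpow T (-1) x); rwa [hΨUz] at this
              rw [hfVx, hfUz, hΨVz]
            · -- j = K : fV x = T^{N-K} x ∈ T^N(V)
              rw [← hKj] at hxV
              have hz : Tpow T (N - K) x ∈ Tpow T N '' V :=
                mem_shift (N - K) hxV (by ring)
              have hΨVz : Psi T V K N (Tpow T (N - K) x) = x := by
                rw [Psi_apply_top (fun j' hj1' hj2' hmem =>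
                  Set.disjoint_left.mp
                    (hPsiV j' N hj1' hj2'.le (by omega) le_rfl (by omega)) hmem hz)
                  hz, Tpow_add' T x (show K - N + (N - K) = 0 by ring), Tpow_zero]
              have hfVx : fV x = Tpow T (N - K) x := by
                have := hfV₁ (Tpow T (N - K) x); rwa [hΨVz] at this
              have hznU : ∀ i, M ≤ i → i ≤ K → Tpow T (N - K) x ∉ Tpow T i '' U := by
                intro i hi1 hi2 hmem
                exact key_sep hsep hi1 (le_refl N) (by omega) hmem hz
              have hΨUz : Psi T U M K (Tpow T (N - K) x) = Tpow T (N - K) x :=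
                Psi_apply_id hMK.le hznU
              have hfUz : fU (Tpow T (N - K) x) = Tpow T (N - K) x := by
                have := hfU₁ (Tpow T (N - K) x); rwa [hΨUz] at this
              rw [hfVx, hfUz, hΨVz]
          · push_neg at hB
            have hΨVx : Psi T V K N x = x := Psi_apply_id (by omega) hB
            have hfVx : fV x = x := by
              have := hfV₁ x; rwa [hΨVx] at this
            have hfUx : fU x = x := by
              have := hfU₁ x; rwa [hΨUx] at this
            rw [hfVx, hfUx, hΨVx]
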